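/- arXiv:1706.01441 — 2 statements merged into one kernel-verified Lean document; each statement's English description precedes it below -/
import Mathlib

section
/- Let n ≥ 2, let ε > 0, δ > 0, δ' ≥ 0, and let λ₁ ≥ … ≥ λ_k ≥ 0 be nonnegative reals (k < n−1). On ℂⁿ with the Hermitian form ω = Σ_{j≤k}(ε+λ_j) i θ_j∧θ̄_j + Σ_{l>k} ε i θ_l∧θ̄_l (for a basis θ orthonormal with respect to a positive form β = Σ i θ_j∧θ̄_j), and with the curvature form γ = Σ_{j≤k}(1+(δ+δ')λ_j) i θ_j∧θ̄_j + Σ_{l>k} i θ_l∧θ̄_l, the operator A = [γ, Λ_ω] acting on (0,1)-forms satisfies ⟨A⁻¹α, α⟩_ω ≤ (n−k−1)^{-1} |α|_β² for every (0,1)-covector α. -/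
/-- Lemma 4 (pointwise form, in the `ω`-orthonormal coframe): with eigenvalues
`w_j = ε + λ_j` (`j ≤ k`), `w_l = ε` (`l > k`) of `ω` and
`g_j = 1 + (δ+δ')λ_j`, `g_l = 1` of the curvature form `γ`, the operator
`A = [γ, Λ_ω]` on `(0,1)`-forms (diagonal with eigenvalues `∑_{m ≠ s} g m / w m`)
satisfies `⟨A⁻¹α, α⟩_ω ≤ (n-k-1)⁻¹ |α|_β²`. -/
theorem stmt11 (n k : ℕ) (hn : 2 ≤ n) (hk : k + 1 < n)
    (ε δ δ' : ℝ) (hε : 0 < ε) (hδ : 0 < δ) (hδ' : 0 ≤ δ')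
    (lam : Fin n → ℝ)
    (hnonneg : ∀ j : Fin n, (j : ℕ) < k → 0 ≤ lam j)
    (hmono : ∀ i j : Fin n, i ≤ j → (j : ℕ) < k → lam j ≤ lam i)
    (w g : Fin n → ℝ)
    (hw : ∀ j, w j = if (j : ℕ) < k then ε + lam j else ε)
    (hg : ∀ j, g j = if (j : ℕ) < k then 1 + (δ + δ') * lam j else 1)
    (α : Fin n → ℂ) :
    ∑ s, (∑ m ∈ Finset.univ.erase s, g m / w m)⁻¹ * (Complex.normSq (α s) / w s)
      ≤ ((n : ℝ) - k - 1)⁻¹ * ∑ s, Complex.normSq (α s) := by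
  have hC : (0:ℝ) < (n : ℝ) - k - 1 := by
    have : (k:ℝ) + 1 < n := by exact_mod_cast hk
    linarith
  set C : ℝ := (n : ℝ) - k - 1 with hCdef
  rw [Finset.mul_sum]
  apply Finset.sum_le_sum
  intro s _
  have hwpos : ∀ m : Fin n, 0 < w m := by
    intro m
    rw [hw]
    split
    · next h => have := hnonneg m h; linarith
    · exact hε
  have hgpos : ∀ m : Fin n, 0 < g m := by
    intro m
    rw [hg]
    split
    · next h => have := hnonneg m h; nlinarith
    · norm_num
  -- card of indices ≥ k
  have hkn : k < n := by omega
  have hcard : (Finset.univ.filter (fun m : Fin n => ¬ (m:ℕ) < k)).card = n - k := by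
    have h1 : (Finset.univ.filter (fun m : Fin n => (m:ℕ) < k)) = Finset.Iio (⟨k, hkn⟩ : Fin n) := by
      ext m; simp [Fin.lt_def]
    have h2 := Finset.card_filter_add_card_filter_not
      (s := (Finset.univ : Finset (Fin n))) (p := fun m : Fin n => (m:ℕ) < k)
    rw [h1, Fin.card_Iio, Finset.card_univ, Fintype.card_fin] at h2
    have h2' : k + (Finset.univ.filter (fun m : Fin n => ¬ (m:ℕ) < k)).card = n := by
      simpa using h2
    omega
  -- lower bound for the denominator sum
  have hlow : C / w s ≤ ∑ m ∈ Finset.univ.erase s, g m / w m := by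
    set T := (Finset.univ.erase s).filter (fun m : Fin n => ¬ (m:ℕ) < k) with hT
    have hsub : ∑ m ∈ T, g m / w m ≤ ∑ m ∈ Finset.univ.erase s, g m / w m := by
      apply Finset.sum_le_sum_of_subset_of_nonneg (Finset.filter_subset _ _)
      intro m _ _
      exact le_of_lt (div_pos (hgpos m) (hwpos m))
    have hTval : ∑ m ∈ T, g m / w m = T.card * (1/ε) := by
      rw [Finset.sum_congr rfl (fun m hm => ?_), Finset.sum_const, nsmul_eq_mul]
      rw [hT, Finset.mem_filter] at hm
      rw [hw, hg, if_neg hm.2, if_neg hm.2]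
    refine le_trans ?_ hsub
    rw [hTval]
    by_cases hs : (s:ℕ) < k
    · have hTeq : T = Finset.univ.filter (fun m : Fin n => ¬ (m:ℕ) < k) := by
        rw [hT]
        ext m
        by_cases hmk : (m:ℕ) < k
        · simp [hmk]
        · have hms : m ≠ s := fun h => hmk (h ▸ hs)
          simp [hmk, hms]
      rw [hTeq, hcard]
      have hws : ε ≤ w s := by rw [hw, if_pos hs]; have := hnonneg s hs; linarith
      have hcast : ((n - k : ℕ) : ℝ) = (n:ℝ) - k := by
        push_cast [Nat.cast_sub (le_of_lt hkn)]; ring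
      rw [hcast]
      have h1 : C / w s ≤ C / ε := by
        apply div_le_div_of_nonneg_left (le_of_lt hC) hε hws
      refine h1.trans ?_
      rw [mul_one_div]
      gcongr
      linarith
    · have hws : w s = ε := by rw [hw, if_neg hs]
      have hTeq : T.card = n - k - 1 := by
        have : (Finset.univ.filter (fun m : Fin n => ¬ (m:ℕ) < k)).erase s =
            (Finset.univ.erase s).filter (fun m : Fin n => ¬ (m:ℕ) < k) := by
          ext m; simp only [Finset.mem_filter, Finset.mem_erase, Finset.mem_univ, true_and]
          tauto
        rw [hT, ← this, Finset.card_erase_of_mem (by simp only [Finset.mem_filter, Finset.mem_univ, true_and]; exact hs), hcard]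
      rw [hTeq, hws]
      have hcast : ((n - k - 1 : ℕ) : ℝ) = C := by
        rw [hCdef]; push_cast [Nat.cast_sub (by omega : 1 ≤ n - k), Nat.cast_sub (le_of_lt hkn)]
        ring
      rw [hcast, div_eq_mul_one_div]
  -- conclude
  have hApos : 0 < ∑ m ∈ Finset.univ.erase s, g m / w m :=
    lt_of_lt_of_le (div_pos hC (hwpos s)) hlow
  have hinv : (∑ m ∈ Finset.univ.erase s, g m / w m)⁻¹ ≤ w s / C := by
    rw [← inv_div]
    exact inv_anti₀ (div_pos hC (hwpos s)) hlow
  calc (∑ m ∈ Finset.univ.erase s, g m / w m)⁻¹ * (Complex.normSq (α s) / w s)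
      ≤ (w s / C) * (Complex.normSq (α s) / w s) := by
        apply mul_le_mul_of_nonneg_right hinv
        exact div_nonneg (Complex.normSq_nonneg _) (le_of_lt (hwpos s))
    _ = C⁻¹ * Complex.normSq (α s) := by
        rw [div_mul_div_comm, mul_comm C (w s), mul_div_mul_left _ _ (hwpos s).ne', div_eq_inv_mul]
end

section
/- Let φ : Ω → (−∞, 0) be C² plurisubharmonic on a bounded domain Ω ⊆ ℂⁿ, and suppose (i∂∂̄φ)^k = 0 on an open set U ⊆ Ω. Then on U, with φ̃ = −log(−φ) and ω_ε = iε∂∂̄ψ + i∂∂̄φ̃ for a smooth ψ with i∂∂̄ψ ≤ M i∂∂̄|z|², there is a constant C (depending on n, k, ε, M, sup_U(−φ)^{-1} bounds) such that ω_ε^n ≤ C (−φ)^{−k−1} (i∂∂̄|z|²)^n pointwise on U. -/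
open scoped ComplexOrder

/-- The Wirtinger derivative `∂f/∂z_j` of a real-valued function on `ℂⁿ`. -/
noncomputable def wderiv (n : ℕ) (f : EuclideanSpace ℂ (Fin n) → ℝ)
    (z : EuclideanSpace ℂ (Fin n)) (j : Fin n) : ℂ :=
  (1 / 2) * ((fderiv ℝ f z (EuclideanSpace.single j 1) : ℂ)
    - Complex.I * (fderiv ℝ f z (EuclideanSpace.single j Complex.I) : ℂ))

/-- The conjugate Wirtinger derivative `∂f/∂z̄_k` of a real-valued function on `ℂⁿ`. -/
noncomputable def wbar (n : ℕ) (f : EuclideanSpace ℂ (Fin n) → ℝ) (k : Fin n)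
    (z : EuclideanSpace ℂ (Fin n)) : ℂ :=
  (1 / 2) * ((fderiv ℝ f z (EuclideanSpace.single k 1) : ℂ)
    + Complex.I * (fderiv ℝ f z (EuclideanSpace.single k Complex.I) : ℂ))

/-- The complex Hessian matrix `(∂²f/∂z_j∂z̄_k)_{j,k}`; the (1,1)-form `i∂∂̄f`
corresponds to this Hermitian matrix. -/
noncomputable def cHess (n : ℕ) (f : EuclideanSpace ℂ (Fin n) → ℝ)
    (z : EuclideanSpace ℂ (Fin n)) : Matrix (Fin n) (Fin n) ℂ :=
  Matrix.of fun j k =>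
    (1 / 2) * (fderiv ℝ (wbar n f k) z (EuclideanSpace.single j 1)
      - Complex.I * fderiv ℝ (wbar n f k) z (EuclideanSpace.single j Complex.I))

/-- The rank-one matrix `((∂φ/∂z_j)(∂φ/∂z_k)^-)_{j,k}` corresponding to the
(1,1)-form `i∂φ∧∂̄φ`. -/
noncomputable def gradForm (n : ℕ) (f : EuclideanSpace ℂ (Fin n) → ℝ)
    (z : EuclideanSpace ℂ (Fin n)) : Matrix (Fin n) (Fin n) ℂ :=
  Matrix.of fun j k => wderiv n f z j * (starRingEnd ℂ) (wderiv n f z k)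

/-- The density of the wedge product `α₁ ∧ ⋯ ∧ αₙ` of `(1,1)`-forms with
coefficient matrices `A 1, …, A n`, relative to the standard volume form. -/
noncomputable def wedgeDensity (n : ℕ) (A : Fin n → Matrix (Fin n) (Fin n) ℂ) : ℂ :=
  ∑ σ : Equiv.Perm (Fin n), ∑ π : Equiv.Perm (Fin n),
    ((Equiv.Perm.sign σ : ℤ) : ℂ) * ∏ i, A (π i) (σ i) i

noncomputable instance (n : ℕ) : MeasurableSpace (EuclideanSpace ℂ (Fin n)) := borel _
instance (n : ℕ) : BorelSpace (EuclideanSpace ℂ (Fin n)) := ⟨rfl⟩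
/-- Lebesgue (Haar) measure on `ℂⁿ`. -/
noncomputable instance (n : ℕ) : MeasureTheory.MeasureSpace (EuclideanSpace ℂ (Fin n)) :=
  ⟨MeasureTheory.Measure.addHaar⟩

lemma aux_det_eq_zero {n : ℕ} (Q : Matrix (Fin n) (Fin n) ℂ)
    (v : Fin n → Fin n → ℂ) (S : Finset (Fin n))
    (hv : ∀ i ∈ S, v i = Q i) (hcard : Q.rank < S.card) :
    (Matrix.of v).det = 0 := by
  by_contra hdet
  have hunit : IsUnit (Matrix.of v) :=
    (Matrix.isUnit_iff_isUnit_det _).2 (isUnit_iff_ne_zero.2 hdet)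
  have hli : LinearIndependent ℂ (fun i => (Matrix.of v) i) :=
    Matrix.linearIndependent_rows_iff_isUnit.2 hunit
  have hli2 : LinearIndependent ℂ (fun i : {x // x ∈ S} => v i) :=
    hli.comp Subtype.val Subtype.val_injective
  set W := LinearMap.range (Q.transpose.mulVecLin) with hW
  have hmem : ∀ i : {x // x ∈ S}, v i ∈ W := by
    rintro ⟨i, hi⟩
    refine ⟨Pi.single i 1, ?_⟩
    rw [Matrix.mulVecLin_apply, hv i hi]
    funext j
    simp [Matrix.mulVec_single]
  have hli3 : LinearIndependent ℂ (fun i : {x // x ∈ S} => (⟨v i, hmem i⟩ : W)) := by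
    apply LinearIndependent.of_comp W.subtype
    exact hli2
  have hcard2 := hli3.fintype_card_le_finrank
  rw [Fintype.card_coe] at hcard2
  have hfr : Module.finrank ℂ W = Q.transpose.rank := rfl
  rw [hfr, Matrix.rank_transpose] at hcard2
  omega

lemma aux_rank_vecMulVec_le {n : ℕ} (w v : Fin n → ℂ) :
    (Matrix.vecMulVec w v).rank ≤ 1 := by
  rw [Matrix.vecMulVec_eq Unit]
  refine (Matrix.rank_mul_le_left _ _).trans ?_
  simpa using Matrix.rank_le_card_width (Matrix.replicateCol Unit w)

lemma aux_cHess_cont {n : ℕ} (ψ : EuclideanSpace ℂ (Fin n) → ℝ) (hψ : ContDiff ℝ (⊤ : ℕ∞) ψ)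
    (j l : Fin n) : Continuous (fun z => cHess n ψ z j l) := by
  have hψ2 : ContDiff ℝ 2 ψ := hψ.of_le (WithTop.coe_le_coe.2 (le_top : (2 : ℕ∞) ≤ ⊤))
  have hfd : ContDiff ℝ 1 (fun z => fderiv ℝ ψ z) := hψ2.fderiv_right (by norm_num)
  have hwbar : ContDiff ℝ 1 (wbar n ψ l) := by
    unfold wbar
    have h1 : ContDiff ℝ 1 (fun z => fderiv ℝ ψ z (EuclideanSpace.single l 1)) :=
      hfd.clm_apply contDiff_const
    have h2 : ContDiff ℝ 1 (fun z => fderiv ℝ ψ z (EuclideanSpace.single l Complex.I)) :=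
      hfd.clm_apply contDiff_const
    exact contDiff_const.mul ((Complex.ofRealCLM.contDiff.comp h1).add
      (contDiff_const.mul (Complex.ofRealCLM.contDiff.comp h2)))
  have hwfd : Continuous (fun z => fderiv ℝ (wbar n ψ l) z) := by
    have := hwbar.fderiv_right (m := 0) (by norm_num)
    exact this.continuous
  have e1 : Continuous (fun z => fderiv ℝ (wbar n ψ l) z (EuclideanSpace.single j 1)) :=
    hwfd.clm_apply continuous_const
  have e2 : Continuous (fun z => fderiv ℝ (wbar n ψ l) z (EuclideanSpace.single j Complex.I)) :=
    hwfd.clm_apply continuous_const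
  exact continuous_const.mul (e1.sub (continuous_const.mul e2))

lemma aux_cHess_bound {n : ℕ} (ψ : EuclideanSpace ℂ (Fin n) → ℝ) (hψ : ContDiff ℝ (⊤ : ℕ∞) ψ)
    (s : Set (EuclideanSpace ℂ (Fin n))) (hs : IsCompact s) :
    ∃ Cψ : ℝ, ∀ z ∈ s, ∀ j l : Fin n, ‖cHess n ψ z j l‖ ≤ Cψ := by
  have hg : Continuous (fun z => (fun p : Fin n × Fin n => cHess n ψ z p.1 p.2)) :=
    continuous_pi fun p => aux_cHess_cont ψ hψ p.1 p.2
  obtain ⟨C, hC⟩ := hs.exists_bound_of_continuousOn hg.continuousOn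
  refine ⟨C, fun z hz j l => ?_⟩
  calc ‖cHess n ψ z j l‖
      = ‖(fun p : Fin n × Fin n => cHess n ψ z p.1 p.2) (j, l)‖ := rfl
    _ ≤ ‖(fun p : Fin n × Fin n => cHess n ψ z p.1 p.2)‖ :=
        norm_le_pi_norm (f := fun p : Fin n × Fin n => cHess n ψ z p.1 p.2) (j, l)
    _ ≤ C := hC z hz

/-- Pointwise volume-form bound: if `(i∂∂̄φ)^k = 0` (Hessian rank `< k`) on `U`,
`i∂∂̄ψ ≤ M i∂∂̄|z|²`, and the data of `φ` are bounded on `U`, then the density of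
`ω_ε^n = (iε∂∂̄ψ + i∂∂̄φ/(-φ) + i∂φ∧∂̄φ/φ²)^n` is at most `C (-φ)^{-k-1}` times
the density of `(i∂∂̄|z|²)^n` on `U`. -/
theorem stmt16 (n k : ℕ) (hk : 0 < k) (Ω U : Set (EuclideanSpace ℂ (Fin n)))
    (hΩo : IsOpen Ω) (hb : Bornology.IsBounded Ω) (hUo : IsOpen U) (hUΩ : U ⊆ Ω)
    (φ ψ : EuclideanSpace ℂ (Fin n) → ℝ)
    (hφ : ContDiffOn ℝ 2 φ Ω) (hφneg : ∀ z ∈ Ω, φ z < 0)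
    (hφpsh : ∀ z ∈ Ω, (cHess n φ z).PosSemidef)
    (hvanish : ∀ z ∈ U, (cHess n φ z).rank < k)
    (hψ : ContDiff ℝ (⊤ : ℕ∞) ψ) (M : ℝ)
    (hM : ∀ z ∈ Ω, (M • (1 : Matrix (Fin n) (Fin n) ℂ) - cHess n ψ z).PosSemidef)
    (ε : ℝ) (hε : 0 < ε)
    (B : ℝ)
    (hB : ∀ z ∈ U, -(φ z) ≤ B ∧ ∀ j l : Fin n,
      ‖cHess n φ z j l‖ ≤ B ∧ ‖wderiv n φ z j‖ ≤ B) :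
    ∃ C : ℝ, ∀ z ∈ U,
      (Matrix.det (Matrix.of fun j l =>
          (ε : ℂ) * cHess n ψ z j l
            + ((-(φ z) : ℝ) : ℂ)⁻¹ * cHess n φ z j l
            + (((φ z) ^ 2 : ℝ) : ℂ)⁻¹ * gradForm n φ z j l)).re
        ≤ C * ((-(φ z))⁻¹) ^ (k + 1) := by
  classical
  obtain ⟨Cψ, hCψ⟩ := aux_cHess_bound ψ hψ (closure Ω) hb.isCompact_closure
  set D : ℝ := max Cψ (max B (B * B)) with hD
  set K : ℝ := (max 1 ε) ^ n * ((n.factorial : ℝ) * D ^ n) * (max 1 B) ^ (k + 1) with hKdef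
  refine ⟨(3 : ℝ) ^ n * K, fun z hz => ?_⟩
  have hzΩ : z ∈ Ω := hUΩ hz
  have hφz : φ z < 0 := hφneg z hzΩ
  have hφpos : 0 < -(φ z) := by linarith
  obtain ⟨hBφ, hBent⟩ := hB z hz
  have hBpos : 0 < B := lt_of_lt_of_le hφpos hBφ
  have hDpos : 0 < D := lt_of_lt_of_le hBpos ((le_max_left B (B * B)).trans (le_max_right _ _))
  have hK0 : 0 ≤ K := by
    apply mul_nonneg (mul_nonneg (pow_nonneg (le_trans zero_le_one (le_max_left 1 ε)) n)
      (mul_nonneg (Nat.cast_nonneg _) (pow_nonneg hDpos.le n)))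
      (pow_nonneg (le_trans zero_le_one (le_max_left 1 B)) (k + 1))
  set a : ℝ := (-(φ z))⁻¹ with hadef
  have ha : 0 < a := inv_pos.2 hφpos
  set P := cHess n ψ z with hP
  set Q := cHess n φ z with hQ
  set R := gradForm n φ z with hR
  set c : Fin 3 → ℂ := ![(ε : ℂ), ((-(φ z) : ℝ) : ℂ)⁻¹, (((φ z) ^ 2 : ℝ) : ℂ)⁻¹] with hc
  set base : Fin 3 → Matrix (Fin n) (Fin n) ℂ := ![P, Q, R] with hbase
  have hrows : (Matrix.of fun j l =>
          (ε : ℂ) * cHess n ψ z j l + ((-(φ z) : ℝ) : ℂ)⁻¹ * cHess n φ z j l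
            + (((φ z) ^ 2 : ℝ) : ℂ)⁻¹ * gradForm n φ z j l)
      = fun j => ∑ t : Fin 3, c t • base t j := by
    funext j l
    simp [hc, hbase, hP, hQ, hR, Fin.sum_univ_three, Matrix.of_apply, Pi.add_apply, Pi.smul_apply,
      smul_eq_mul]
  have hexp : (Matrix.det (Matrix.of fun j l =>
          (ε : ℂ) * cHess n ψ z j l + ((-(φ z) : ℝ) : ℂ)⁻¹ * cHess n φ z j l
            + (((φ z) ^ 2 : ℝ) : ℂ)⁻¹ * gradForm n φ z j l))
      = ∑ r : Fin n → Fin 3, (∏ i, c (r i)) * (Matrix.of fun i => base (r i) i).det := by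
    calc (Matrix.det (Matrix.of fun j l =>
          (ε : ℂ) * cHess n ψ z j l + ((-(φ z) : ℝ) : ℂ)⁻¹ * cHess n φ z j l
            + (((φ z) ^ 2 : ℝ) : ℂ)⁻¹ * gradForm n φ z j l))
        = Matrix.detRowAlternating (fun j => ∑ t : Fin 3, c t • base t j) := by rw [hrows]; rfl
      _ = ∑ r : Fin n → Fin 3, Matrix.detRowAlternating (fun i => c (r i) • base (r i) i) :=
        (Matrix.detRowAlternating (R := ℂ) (n := Fin n)).toMultilinearMap.map_sum
          (g := fun i (t : Fin 3) => c t • base t i)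
      _ = ∑ r : Fin n → Fin 3, (∏ i, c (r i)) * (Matrix.of fun i => base (r i) i).det := by
        refine Finset.sum_congr rfl fun r _ => ?_
        have := (Matrix.detRowAlternating (R := ℂ) (n := Fin n)).toMultilinearMap.map_smul_univ
          (fun i => c (r i)) (fun i => base (r i) i)
        rw [show (Matrix.of fun i => base (r i) i).det
          = Matrix.detRowAlternating (fun i => base (r i) i) from rfl]
        simpa [smul_eq_mul] using this
  have habs : ∀ r : Fin n → Fin 3,
      ‖(∏ i, c (r i)) * (Matrix.of fun i => base (r i) i).det‖
        ≤ K * a ^ (k + 1) := by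
    intro r
    have hKA : 0 ≤ K * a ^ (k + 1) := mul_nonneg hK0 (pow_nonneg ha.le _)
    rw [norm_mul]
    by_cases h1 : k ≤ (Finset.univ.filter (fun i => r i = 1)).card
    · have hzero : (Matrix.of fun i => base (r i) i).det = 0 := by
        apply aux_det_eq_zero Q _ (Finset.univ.filter (fun i => r i = 1))
        · intro i hi
          rw [Finset.mem_filter] at hi
          rw [hi.2]
          simp [hbase]
        · exact lt_of_lt_of_le (hvanish z hz) h1
      rw [hzero]
      simpa using hKA
    by_cases h2 : 2 ≤ (Finset.univ.filter (fun i => r i = 2)).card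
    · have hRrank : R.rank ≤ 1 := by
        have hRvv : R = Matrix.vecMulVec (wderiv n φ z) (star (wderiv n φ z)) := by
          funext j l
          simp [hR, gradForm, Matrix.vecMulVec, Pi.star_apply]
        rw [hRvv]
        exact aux_rank_vecMulVec_le _ _
      have hzero : (Matrix.of fun i => base (r i) i).det = 0 := by
        apply aux_det_eq_zero R _ (Finset.univ.filter (fun i => r i = 2))
        · intro i hi
          rw [Finset.mem_filter] at hi
          rw [hi.2]
          simp [hbase]
        · exact lt_of_le_of_lt hRrank (by omega)
      rw [hzero]
      simpa using hKA
    push_neg at h1 h2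
    set p := (Finset.univ.filter (fun i => r i = 0)).card with hp
    set q1 := (Finset.univ.filter (fun i => r i = 1)).card with hq1
    set q2 := (Finset.univ.filter (fun i => r i = 2)).card with hq2
    have hm : q1 + 2 * q2 ≤ k + 1 := by omega
    have hprod : ‖∏ i, c (r i)‖ = ∏ i, ‖c (r i)‖ :=
      norm_prod _ _
    have hfib : ∏ i, ‖c (r i)‖
        = ∏ t : Fin 3, (‖c t‖) ^ (Finset.univ.filter (fun i => r i = t)).card := by
      rw [← Finset.prod_fiberwise_of_maps_to (g := r) (fun i _ => Finset.mem_univ (r i))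
        (fun i => ‖c (r i)‖)]
      refine Finset.prod_congr rfl fun t _ => ?_
      rw [Finset.prod_congr rfl (fun i hi => by rw [(Finset.mem_filter.1 hi).2]),
        Finset.prod_const]
    have hc0 : ‖c 0‖ = ε := by
      simp [hc, abs_of_pos hε]
    have hc1 : ‖c 1‖ = a := by
      have h : c 1 = ((-(φ z) : ℝ) : ℂ)⁻¹ := rfl
      rw [h, norm_inv, Complex.norm_real, Real.norm_eq_abs, abs_of_pos hφpos]
    have hc2 : ‖c 2‖ = a ^ 2 := by
      have h : c 2 = (((φ z) ^ 2 : ℝ) : ℂ)⁻¹ := rfl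
      rw [h, norm_inv, Complex.norm_real, Real.norm_eq_abs, abs_pow, abs_of_neg hφz, hadef]
      exact (inv_pow _ 2).symm
    have hdetle : ‖(Matrix.of fun i => base (r i) i).det‖
        ≤ (n.factorial : ℝ) * D ^ n := by
      have hentry : ∀ i j : Fin n, ‖(Matrix.of fun i => base (r i) i) i j‖ ≤ D := by
        intro i j
        have hall : ∀ t : Fin 3, ‖base t i j‖ ≤ D := by
          intro t
          fin_cases t
          · simp only [hbase, Matrix.cons_val_zero]
            exact (hCψ z (subset_closure hzΩ) i j).trans (le_max_left _ _)
          · simp only [hbase, Matrix.cons_val_one, Matrix.head_cons]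
            exact (hBent i j).1.trans ((le_max_left B (B * B)).trans (le_max_right _ _))
          · simp only [hbase]
            have : ‖R i j‖ ≤ B * B := by
              have hRij : R i j = wderiv n φ z i * (starRingEnd ℂ) (wderiv n φ z j) := rfl
              rw [hRij, norm_mul, Complex.norm_conj]
              exact mul_le_mul (hBent i i).2 (hBent j j).2 (norm_nonneg _) hBpos.le
            refine le_trans ?_ ((le_max_right B (B * B)).trans (le_max_right _ _))
            simpa using this
        exact hall (r i)
      have := Matrix.det_le (A := Matrix.of fun i => base (r i) i) (abv := IsAbsoluteValue.toAbsoluteValue (norm : ℂ → ℝ))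
        (x := D) hentry
      rw [Fintype.card_fin, nsmul_eq_mul] at this
      exact this
    have hpn : p ≤ n := by
      have := Finset.card_filter_le (Finset.univ : Finset (Fin n)) (fun i => r i = 0)
      simpa using this
    have hεp : ε ^ p ≤ (max 1 ε) ^ n :=
      (pow_le_pow_left₀ hε.le (le_max_right 1 ε) p).trans
        (pow_le_pow_right₀ (le_max_left 1 ε) hpn)
    have hapow : a ^ q1 * (a ^ 2) ^ q2 ≤ a ^ (k + 1) * (max 1 B) ^ (k + 1) := by
      have haeq : a ^ q1 * (a ^ 2) ^ q2 = a ^ (q1 + 2 * q2) := by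
        rw [← pow_mul, ← pow_add]
      rw [haeq]
      have hobs : a ^ (q1 + 2 * q2)
          = a ^ (k + 1) * (-(φ z)) ^ (k + 1 - (q1 + 2 * q2)) := by
        calc a ^ (q1 + 2 * q2)
            = a ^ (q1 + 2 * q2) * ((a * (-(φ z))) ^ (k + 1 - (q1 + 2 * q2))) := by
              rw [hadef, inv_mul_cancel₀ hφpos.ne', one_pow, mul_one]
          _ = a ^ (q1 + 2 * q2) * (a ^ (k + 1 - (q1 + 2 * q2))
                * (-(φ z)) ^ (k + 1 - (q1 + 2 * q2))) := by rw [mul_pow]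
          _ = a ^ (k + 1) * (-(φ z)) ^ (k + 1 - (q1 + 2 * q2)) := by
              rw [← mul_assoc, ← pow_add, Nat.add_sub_cancel' hm]
      rw [hobs]
      refine mul_le_mul_of_nonneg_left ?_ (pow_nonneg ha.le _)
      calc (-(φ z)) ^ (k + 1 - (q1 + 2 * q2))
          ≤ (max 1 B) ^ (k + 1 - (q1 + 2 * q2)) :=
            pow_le_pow_left₀ hφpos.le (hBφ.trans (le_max_right 1 B)) _
        _ ≤ (max 1 B) ^ (k + 1) := pow_le_pow_right₀ (le_max_left 1 B) (by omega)
    calc ‖∏ i, c (r i)‖ * ‖(Matrix.of fun i => base (r i) i).det‖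
        = (ε ^ p * (a ^ q1 * (a ^ 2) ^ q2))
            * ‖(Matrix.of fun i => base (r i) i).det‖ := by
          rw [hprod, hfib, Fin.prod_univ_three, hc0, hc1, hc2]
          ring
      _ ≤ ((max 1 ε) ^ n * (a ^ (k + 1) * (max 1 B) ^ (k + 1)))
            * ((n.factorial : ℝ) * D ^ n) := by
          refine mul_le_mul (mul_le_mul hεp hapow ?_ ?_) hdetle (norm_nonneg _) ?_
          · positivity
          · positivity
          · positivity
      _ = K * a ^ (k + 1) := by rw [hKdef]; ring
  calc (Matrix.det (Matrix.of fun j l =>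
          (ε : ℂ) * cHess n ψ z j l + ((-(φ z) : ℝ) : ℂ)⁻¹ * cHess n φ z j l
            + (((φ z) ^ 2 : ℝ) : ℂ)⁻¹ * gradForm n φ z j l)).re
      ≤ ‖Matrix.det (Matrix.of fun j l =>
          (ε : ℂ) * cHess n ψ z j l + ((-(φ z) : ℝ) : ℂ)⁻¹ * cHess n φ z j l
            + (((φ z) ^ 2 : ℝ) : ℂ)⁻¹ * gradForm n φ z j l)‖ := Complex.re_le_norm _
    _ = ‖∑ r : Fin n → Fin 3,
          (∏ i, c (r i)) * (Matrix.of fun i => base (r i) i).det‖ := by rw [hexp]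
    _ ≤ ∑ r : Fin n → Fin 3,
          ‖(∏ i, c (r i)) * (Matrix.of fun i => base (r i) i).det‖ :=
        norm_sum_le _ _
    _ ≤ ∑ _r : Fin n → Fin 3, K * a ^ (k + 1) := Finset.sum_le_sum fun r _ => habs r
    _ = (Fintype.card (Fin n → Fin 3) : ℝ) * (K * a ^ (k + 1)) := by
        rw [Finset.sum_const, nsmul_eq_mul, Finset.card_univ]
    _ = (3 : ℝ) ^ n * K * a ^ (k + 1) := by
        rw [Fintype.card_fun, Fintype.card_fin, Fintype.card_fin]
        push_cast
        ring
end
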